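/- arXiv:1609.04439 — 2 statements merged into one kernel-verified Lean document; each statement's English description precedes it below -/
import Mathlib

section
/- For all m, n ≥ 3 there exist regular languages L' and L, with alphabets Σ_{L'} and Σ_L each of cardinality 3 whose intersection has cardinality 2 (so Σ_{L'} \ Σ_L and Σ_L \ Σ_{L'} are both nonempty), such that L' has quotient complexity m, L has quotient complexity n, κ(L' ∪ L) = (m+1)(n+1), and κ(L' ⊕ L) = (m+1)(n+1), where L' ⊕ L = (L' \ L) ∪ (L \ L') is the symmetric difference. -/
/-- The alphabet of a language: letters occurring in some word of `L`. -/
def alphabetOf {α : Type*} (L : Language α) : Set α :=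
  {a | ∃ u v : List α, u ++ [a] ++ v ∈ L}

/-- The left quotient of `L` by a word `w`. -/
def leftQuotient {α : Type*} (L : Language α) (w : List α) : Language α :=
  {x | w ++ x ∈ L}

/-- The set of left quotients of `L` by words over the alphabet of `L`. -/
def quotientSet {α : Type*} (L : Language α) : Set (Language α) :=
  {K | ∃ w : List α, (∀ a ∈ w, a ∈ alphabetOf L) ∧ K = leftQuotient L w}

/-- `L` is regular with quotient complexity `m`: the set of its left quotients
(by words over its own alphabet) is finite of cardinality exactly `m`. -/
def HasComplexity {α : Type*} (L : Language α) (m : ℕ) : Prop :=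
  (quotientSet L).Finite ∧ (quotientSet L).ncard = m

/-- All words whose letters lie in `S`. -/
def starOf {α : Type*} (S : Set α) : Language α :=
  {w | ∀ a ∈ w, a ∈ S}

/-- A nonempty language `L` is a right ideal if `L · Σ_L^* = L`. -/
def IsRightIdeal {α : Type*} (L : Language α) : Prop :=
  (∃ w, w ∈ L) ∧ L * starOf (alphabetOf L) = L

/-- A nonempty language `L` is a left ideal if `Σ_L^* · L = L`. -/
def IsLeftIdeal {α : Type*} (L : Language α) : Prop :=
  (∃ w, w ∈ L) ∧ starOf (alphabetOf L) * L = L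

/-- A nonempty language `L` is a two-sided ideal if `Σ_L^* · L · Σ_L^* = L`. -/
def IsTwoSidedIdeal {α : Type*} (L : Language α) : Prop :=
  (∃ w, w ∈ L) ∧ starOf (alphabetOf L) * L * starOf (alphabetOf L) = L

/-! `L'` counts the letter `1` modulo `m` and dies on `3`; `L` counts `2` modulo `n` and dies
on `0`. A quotient of `L' ⊔ L` or of the symmetric difference by `w` is the same combination of
the quotients of `L'` and `L` by `w`, so it is determined by the pair of their states, one of
`m + 1` and one of `n + 1` (the extra one being the empty quotient). Conversely the pair is
recovered from the quotient: `0` is neutral for `L'` but kills `L`, so quotienting once more by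
`0` leaves the `L'`-component, and `3` likewise leaves the `L`-component. All pairs of states
are reachable, so there are exactly `(m + 1)(n + 1)` quotients. -/

open Function

variable {α : Type*}

lemma mem_leftQuotient {L : Language α} {w x : List α} :
    x ∈ leftQuotient L w ↔ w ++ x ∈ L :=
  Iff.rfl

def combine (b : Prop → Prop → Prop) (K L : Language α) : Language α :=
  {x | b (x ∈ K) (x ∈ L)}

lemma leftQuotient_combine (b : Prop → Prop → Prop) (K L : Language α) (w : List α) :
    leftQuotient (combine b K L) w = combine b (leftQuotient K w) (leftQuotient L w) :=
  rfl

lemma combine_bot_right {b : Prop → Prop → Prop} (hb : ∀ p, b p False ↔ p)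
    (K : Language α) : combine b K ⊥ = K :=
  Set.ext fun x => hb (x ∈ K)

lemma combine_bot_left {b : Prop → Prop → Prop} (hb : ∀ q, b False q ↔ q)
    (L : Language α) : combine b ⊥ L = L :=
  Set.ext fun x => hb (x ∈ L)

lemma mem_alphabetOf_of_leftQuotient_ne_bot {L : Language α} {a : α}
    (h : leftQuotient L [a] ≠ ⊥) : a ∈ alphabetOf L := by
  obtain ⟨x, hx⟩ := Set.nonempty_iff_ne_empty.2 h
  exact ⟨[], x, hx⟩

theorem hasComplexity_of_injective {L : Language α} {σ : Type*} [Finite σ]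
    {Q : σ → Language α} (hQ : Injective Q)
    (hsound : ∀ w ∈ starOf (alphabetOf L), leftQuotient L w ∈ Set.range Q)
    (hcomplete : ∀ s, ∃ w ∈ starOf (alphabetOf L), leftQuotient L w = Q s) :
    HasComplexity L (Nat.card σ) := by
  have h : quotientSet L = Set.range Q := by
    ext K
    constructor
    · rintro ⟨w, hw, rfl⟩
      exact hsound w hw
    · rintro ⟨s, rfl⟩
      obtain ⟨w, hw, hws⟩ := hcomplete s
      exact ⟨w, hw, hws.symm⟩
  rw [HasComplexity, h]
  exact ⟨Set.finite_range Q, Set.ncard_range_of_injective hQ⟩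

section countLang

variable [DecidableEq α] {c f : α} {m : ℕ}

/-- The quotients of `countLang c f m (some 0)`: after reading `w`, the state is `none` if `w`
contains `f`, and `some k` with `k` the number of `c`s in `w` modulo `m` otherwise. -/
def countLang (c f : α) (m : ℕ) : Option (ZMod m) → Language α
  | none => ⊥
  | some k => {x | f ∉ x ∧ k + x.count c = 0}

lemma countLang_none : countLang c f m none = ⊥ :=
  rfl

lemma notMem_countLang_none {x : List α} : x ∉ countLang c f m none :=
  id

lemma mem_countLang_some {k : ZMod m} {x : List α} :
    x ∈ countLang c f m (some k) ↔ f ∉ x ∧ k + x.count c = 0 :=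
  Iff.rfl

def countStep (c f : α) (m : ℕ) (w : List α) (s : Option (ZMod m)) : Option (ZMod m) :=
  if f ∈ w then none else s.map (· + (w.count c : ZMod m))

lemma leftQuotient_countLang (s : Option (ZMod m)) (w : List α) :
    leftQuotient (countLang c f m s) w = countLang c f m (countStep c f m w s) := by
  ext x
  rcases s with _ | k
  · simp [countStep, mem_leftQuotient, notMem_countLang_none]
  · by_cases hw : f ∈ w
    · simp [countStep, hw, mem_leftQuotient, mem_countLang_some, notMem_countLang_none]
    · simp [countStep, hw, mem_leftQuotient, mem_countLang_some, add_assoc]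

lemma countStep_singleton_of_ne {g : α} (hgc : g ≠ c) (hgf : g ≠ f) (s : Option (ZMod m)) :
    countStep c f m [g] s = s := by
  simp [countStep, hgf.symm, hgc]

lemma countStep_self_singleton (s : Option (ZMod m)) : countStep c f m [f] s = none := by
  simp [countStep]

lemma countStep_replicate (hcf : c ≠ f) (j : ℕ) (s : Option (ZMod m)) :
    countStep c f m (List.replicate j c) s = s.map (· + (j : ZMod m)) := by
  simp [countStep, List.mem_replicate, hcf.symm]

lemma replicate_mem_countLang_iff [NeZero m] (hcf : c ≠ f) (k : ZMod m)
    (s : Option (ZMod m)) :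
    List.replicate (-k).val c ∈ countLang c f m s ↔ s = some k := by
  rcases s with _ | k'
  · simp [notMem_countLang_none]
  · simp [mem_countLang_some, List.mem_replicate, hcf.symm, add_neg_eq_zero]

lemma countLang_injective [NeZero m] (hcf : c ≠ f) : Injective (countLang c f m) := by
  have key (s s' : Option (ZMod m)) (h : countLang c f m s = countLang c f m s') (k : ZMod m)
      (hs : s = some k) : s' = some k := by
    rw [← replicate_mem_countLang_iff hcf, ← h, replicate_mem_countLang_iff hcf]
    exact hs
  intro s s' h
  rcases s with _ | k
  · rcases s' with _ | k'
    · rfl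
    · exact key _ _ h.symm k' rfl
  · exact (key _ _ h k rfl).symm

lemma countLang_ne_bot [NeZero m] (hcf : c ≠ f) (k : ZMod m) : countLang c f m (some k) ≠ ⊥ :=
  (countLang_injective hcf).ne (Option.some_ne_none k)

lemma alphabetOf_countLang [NeZero m] (hcf : c ≠ f) :
    alphabetOf (countLang c f m (some 0)) = {a | a ≠ f} := by
  ext a
  constructor
  · rintro ⟨u, v, hf, -⟩ rfl
    exact hf (by simp)
  · intro haf
    apply mem_alphabetOf_of_leftQuotient_ne_bot
    rw [leftQuotient_countLang]
    simpa [countStep, Ne.symm haf] using countLang_ne_bot hcf _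

theorem hasComplexity_countLang [NeZero m] (hcf : c ≠ f) :
    HasComplexity (countLang c f m (some 0)) m := by
  have hinj : Injective fun k : ZMod m => countLang c f m (some k) :=
    (countLang_injective hcf).comp (Option.some_injective _)
  have hsound (w : List α) (hw : w ∈ starOf (alphabetOf (countLang c f m (some 0)))) :
      leftQuotient (countLang c f m (some 0)) w ∈
        Set.range fun k => countLang c f m (some k) := by
    rw [alphabetOf_countLang hcf] at hw
    have hfw : f ∉ w := fun h => hw f h rfl
    exact ⟨w.count c, by simp [leftQuotient_countLang, countStep, hfw]⟩
  have hcomplete (k : ZMod m) : ∃ w ∈ starOf (alphabetOf (countLang c f m (some 0))),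
      leftQuotient (countLang c f m (some 0)) w = countLang c f m (some k) := by
    refine ⟨List.replicate k.val c, ?_, ?_⟩
    · rw [alphabetOf_countLang hcf]
      intro a ha
      simpa [(List.mem_replicate.1 ha).2] using hcf
    · simp [leftQuotient_countLang, countStep_replicate hcf]
  simpa only [Nat.card_zmod] using hasComplexity_of_injective hinj hsound hcomplete

end countLang

section witnesses

variable {b : Prop → Prop → Prop} {m n : ℕ}

def pairLang (b : Prop → Prop → Prop) (m n : ℕ) (s : Option (ZMod m) × Option (ZMod n)) :
    Language (Fin 4) :=
  combine b (countLang 1 3 m s.1) (countLang 2 0 n s.2)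

def pairState (m n : ℕ) (w : List (Fin 4)) : Option (ZMod m) × Option (ZMod n) :=
  (countStep 1 3 m w (some 0), countStep 2 0 n w (some 0))

lemma leftQuotient_pairLang (s : Option (ZMod m) × Option (ZMod n)) (w : List (Fin 4)) :
    leftQuotient (pairLang b m n s) w =
      pairLang b m n (countStep 1 3 m w s.1, countStep 2 0 n w s.2) := by
  simp only [pairLang, leftQuotient_combine, leftQuotient_countLang]

lemma leftQuotient_pairLang_zero (hb : ∀ p, b p False ↔ p)
    (s : Option (ZMod m) × Option (ZMod n)) :
    leftQuotient (pairLang b m n s) [0] = countLang 1 3 m s.1 := by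
  rw [leftQuotient_pairLang, countStep_singleton_of_ne (by decide) (by decide),
    countStep_self_singleton, pairLang, countLang_none, combine_bot_right hb]

lemma leftQuotient_pairLang_three (hb : ∀ q, b False q ↔ q)
    (s : Option (ZMod m) × Option (ZMod n)) :
    leftQuotient (pairLang b m n s) [3] = countLang 2 0 n s.2 := by
  rw [leftQuotient_pairLang, countStep_self_singleton,
    countStep_singleton_of_ne (by decide) (by decide), pairLang, countLang_none,
    combine_bot_left hb]

lemma pairLang_injective [NeZero m] [NeZero n] (hb₁ : ∀ p, b p False ↔ p)
    (hb₂ : ∀ q, b False q ↔ q) : Injective (pairLang b m n) := by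
  intro s t h
  have h₁ := congrArg (leftQuotient · [0]) h
  have h₂ := congrArg (leftQuotient · [3]) h
  simp only [leftQuotient_pairLang_zero hb₁, leftQuotient_pairLang_three hb₂] at h₁ h₂
  exact Prod.ext (countLang_injective (by decide) h₁) (countLang_injective (by decide) h₂)

lemma exists_pairState_eq [NeZero m] [NeZero n] (s : Option (ZMod m) × Option (ZMod n)) :
    ∃ w, pairState m n w = s := by
  rcases s with ⟨_ | k, _ | l⟩
  · exact ⟨[0, 3], by simp [pairState, countStep]⟩
  · exact ⟨3 :: List.replicate l.val 2, by simp [pairState, countStep, List.mem_replicate]⟩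
  · exact ⟨0 :: List.replicate k.val 1, by simp [pairState, countStep, List.mem_replicate]⟩
  · exact ⟨List.replicate k.val 1 ++ List.replicate l.val 2,
      by simp [pairState, countStep, List.mem_replicate, List.count_replicate]⟩

lemma alphabetOf_pairLang [NeZero m] [NeZero n]
    (hb₁ : ∀ p, b p False ↔ p) (hb₂ : ∀ q, b False q ↔ q) :
    alphabetOf (pairLang b m n (some 0, some 0)) = Set.univ := by
  refine Set.eq_univ_of_forall fun a => mem_alphabetOf_of_leftQuotient_ne_bot ?_
  have hbot : pairLang b m n (none, none) = ⊥ := combine_bot_left hb₂ ⊥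
  rw [leftQuotient_pairLang, ← hbot]
  refine (pairLang_injective hb₁ hb₂).ne ?_
  fin_cases a <;> simp [countStep]

theorem hasComplexity_pairLang [NeZero m] [NeZero n]
    (hb₁ : ∀ p, b p False ↔ p) (hb₂ : ∀ q, b False q ↔ q) :
    HasComplexity (pairLang b m n (some 0, some 0)) ((m + 1) * (n + 1)) := by
  have hstar (w : List (Fin 4)) :
      w ∈ starOf (alphabetOf (pairLang b m n (some 0, some 0))) := by
    rw [alphabetOf_pairLang hb₁ hb₂]
    exact fun a _ => Set.mem_univ a
  have hcomplete (s : Option (ZMod m) × Option (ZMod n)) :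
      ∃ w ∈ starOf (alphabetOf (pairLang b m n (some 0, some 0))),
        leftQuotient (pairLang b m n (some 0, some 0)) w = pairLang b m n s := by
    obtain ⟨w, rfl⟩ := exists_pairState_eq s
    exact ⟨w, hstar w, leftQuotient_pairLang _ w⟩
  simpa only [Nat.card_prod, Finite.card_option, Nat.card_zmod] using
    hasComplexity_of_injective (pairLang_injective hb₁ hb₂)
      (fun w _ => ⟨_, (leftQuotient_pairLang _ w).symm⟩) hcomplete

end witnesses

/-- the bound `(m+1)(n+1)` for union and symmetric difference is tight,
with witnesses over three-letter alphabets sharing exactly two letters. -/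
theorem union_symmDiff_tight (m n : ℕ) (hm : 3 ≤ m) (hn : 3 ≤ n) :
    ∃ L' L : Language (Fin 4),
      (alphabetOf L').ncard = 3 ∧ (alphabetOf L).ncard = 3 ∧
      (alphabetOf L' ∩ alphabetOf L).ncard = 2 ∧
      (alphabetOf L' \ alphabetOf L).Nonempty ∧
      (alphabetOf L \ alphabetOf L').Nonempty ∧
      HasComplexity L' m ∧ HasComplexity L n ∧
      HasComplexity (L' ⊔ L) ((m + 1) * (n + 1)) ∧
      HasComplexity ((L' \ L) ⊔ (L \ L')) ((m + 1) * (n + 1)) := by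
  have : NeZero m := ⟨by omega⟩
  have : NeZero n := ⟨by omega⟩
  have hL' : alphabetOf (countLang 1 3 m (some 0)) = {a : Fin 4 | a ≠ 3} :=
    alphabetOf_countLang (by decide)
  have hL : alphabetOf (countLang 2 0 n (some 0)) = {a : Fin 4 | a ≠ 0} :=
    alphabetOf_countLang (by decide)
  refine ⟨countLang 1 3 m (some 0), countLang 2 0 n (some 0),
    ?_, ?_, ?_, ⟨0, ?_⟩, ⟨3, ?_⟩,
    hasComplexity_countLang (by decide), hasComplexity_countLang (by decide),
    hasComplexity_pairLang (b := Or) (fun p => (or_false p).to_iff)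
      (fun q => (false_or q).to_iff),
    hasComplexity_pairLang (b := Xor) (fun p => by simp [xor_def]) (fun q => by simp [xor_def])⟩
  all_goals
    simp only [hL', hL]
    first
    | decide
    | (rw [Set.ncard_eq_toFinset_card']; rfl)
end

section
/- For all m, n ≥ 3 there exist regular languages L' and L such that L' has quotient complexity m, L has quotient complexity n, the alphabet of L is a proper subset of the alphabet of L' (with |Σ_{L'}| = 3 and |Σ_L| = 2), and the set difference satisfies κ(L' \ L) = m·n + m. -/
/-!
Take `L'` to be the words whose number of `1`s is divisible by `m`, and `L` the words over `{0, 1}`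
whose number of `0`s is divisible by `n`. A quotient of `L'` only remembers the number of `1`s read
modulo `m`; a quotient of `L` remembers the number of `0`s read modulo `n`, or that a `2` has been
read, after which it is empty. A quotient of `L' \ L` remembers both, and all `m · (n + 1)`
combinations are reachable and pairwise distinguishable: `2 1ˢ` separates the residues of `1`s,
and `1ˢ 0ᵗ` separates the states of `L`.
-/

open Function List

section

variable {α : Type*}

theorem mem_alphabetOf_of_mem {L : Language α} {x : List α} {a : α} (hx : x ∈ L) (ha : a ∈ x) :
    a ∈ alphabetOf L := by
  obtain ⟨u, v, rfl⟩ := append_of_mem ha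
  exact ⟨u, v, by simpa using hx⟩

theorem alphabetOf_subset_of_le_starOf {L : Language α} {S : Set α} (h : L ≤ starOf S) :
    alphabetOf L ⊆ S := by
  rintro a ⟨u, v, huv⟩
  exact h huv a (by simp)

theorem mem_starOf_append {S : Set α} {u v : List α} :
    u ++ v ∈ starOf S ↔ u ∈ starOf S ∧ v ∈ starOf S :=
  forall_mem_append

theorem replicate_mem_starOf {S : Set α} {b : α} (hb : b ∈ S) (k : ℕ) :
    replicate k b ∈ starOf S := by
  intro x hx
  rwa [eq_of_mem_replicate hx]

theorem leftQuotient_sdiff (L K : Language α) (w : List α) :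
    leftQuotient (L \ K) w = leftQuotient L w \ leftQuotient K w := rfl

theorem leftQuotient_starOf_inf_of_mem {S : Set α} {w : List α} (hw : w ∈ starOf S)
    (K : Language α) : leftQuotient (starOf S ⊓ K) w = starOf S ⊓ leftQuotient K w := by
  ext x
  change w ++ x ∈ starOf S ∧ w ++ x ∈ K ↔ x ∈ starOf S ∧ w ++ x ∈ K
  rw [mem_starOf_append, and_iff_right hw]

theorem leftQuotient_starOf_inf_of_notMem {S : Set α} {w : List α} (hw : w ∉ starOf S)
    (K : Language α) : leftQuotient (starOf S ⊓ K) w = 0 := by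
  ext x
  change w ++ x ∈ starOf S ∧ w ++ x ∈ K ↔ False
  rw [mem_starOf_append]
  tauto

theorem hasComplexity_of_quotients {ι : Type*} [Finite ι] {L : Language α}
    (f : ι → Language α) (hf : Injective f)
    (hmem : ∀ w ∈ starOf (alphabetOf L), leftQuotient L w ∈ Set.range f)
    (hreach : ∀ i, ∃ w ∈ starOf (alphabetOf L), leftQuotient L w = f i) :
    HasComplexity L (Nat.card ι) := by
  have hQ : quotientSet L = Set.range f := by
    ext K
    constructor
    · rintro ⟨w, hw, rfl⟩
      exact hmem w hw
    · rintro ⟨i, rfl⟩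
      obtain ⟨w, hw, hwi⟩ := hreach i
      exact ⟨w, hw, hwi.symm⟩
  rw [HasComplexity, hQ]
  exact ⟨Set.finite_range f, Set.ncard_range_of_injective hf⟩

end

section CountModEq

variable {α : Type*} [DecidableEq α]

def countModEq (a : α) (m : ℕ) (s : ZMod m) : Language α :=
  {x | (x.count a : ZMod m) = s}

variable {a b : α} {m n : ℕ}

@[simp]
theorem mem_countModEq {s : ZMod m} {x : List α} :
    x ∈ countModEq a m s ↔ (x.count a : ZMod m) = s := Iff.rfl

theorem leftQuotient_countModEq (s : ZMod m) (w : List α) :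
    leftQuotient (countModEq a m s) w = countModEq a m (s - w.count a) := by
  ext x
  change ((w ++ x).count a : ZMod m) = s ↔ _
  rw [mem_countModEq, count_append, Nat.cast_add, eq_sub_iff_add_eq, add_comm]

theorem append_replicate_mem_countModEq [NeZero m] (x : List α) (s : ZMod m) :
    x ++ replicate (s - x.count a).val a ∈ countModEq a m s := by
  simp

theorem countModEq_injective [NeZero m] : Injective (countModEq a m) := by
  intro s t h
  have hs : replicate s.val a ∈ countModEq a m t := h ▸ by simp
  simpa using hs

theorem alphabetOf_countModEq [NeZero m] (s : ZMod m) :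
    alphabetOf (countModEq a m s) = Set.univ :=
  Set.eq_univ_of_forall fun c =>
    mem_alphabetOf_of_mem (append_replicate_mem_countModEq [c] s) (by simp)

theorem hasComplexity_countModEq [NeZero m] (a : α) (r : ZMod m) :
    HasComplexity (countModEq a m r) m := by
  simpa using hasComplexity_of_quotients (countModEq a m) countModEq_injective
    (fun w _ => ⟨_, (leftQuotient_countModEq r w).symm⟩)
    (fun s => ⟨replicate (r - s).val a, fun _ _ => by rw [alphabetOf_countModEq]; trivial,
      by simp [leftQuotient_countModEq]⟩)

variable {S : Set α}

theorem alphabetOf_starOf_inf_countModEq [NeZero n] (hb : b ∈ S) (t : ZMod n) :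
    alphabetOf (starOf S ⊓ countModEq b n t) = S := by
  refine (alphabetOf_subset_of_le_starOf inf_le_left).antisymm fun c hc => ?_
  refine mem_alphabetOf_of_mem (x := [c] ++ _) ⟨?_, append_replicate_mem_countModEq [c] t⟩
    (by simp)
  exact mem_starOf_append.2 ⟨fun x hx => by rwa [mem_singleton.1 hx], replicate_mem_starOf hb _⟩

theorem starOf_inf_countModEq_injective [NeZero n] (hb : b ∈ S) :
    Injective fun t : ZMod n => starOf S ⊓ countModEq b n t := by
  intro s t h
  have hs : replicate s.val b ∈ starOf S ⊓ countModEq b n s :=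
    Language.mem_inf.2 ⟨replicate_mem_starOf hb _, by simp⟩
  rw [show starOf S ⊓ countModEq b n s = _ from h] at hs
  simpa using (Language.mem_inf.1 hs).2

theorem hasComplexity_starOf_inf_countModEq [NeZero n] (hb : b ∈ S) (r : ZMod n) :
    HasComplexity (starOf S ⊓ countModEq b n r) n := by
  suffices HasComplexity (starOf S ⊓ countModEq b n r) (Nat.card (ZMod n)) by
    rwa [Nat.card_zmod] at this
  refine hasComplexity_of_quotients _ (starOf_inf_countModEq_injective hb) (fun w hw => ?_)
    (fun t => ⟨replicate (r - t).val b, ?_, ?_⟩)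
  · rw [alphabetOf_starOf_inf_countModEq hb] at hw
    exact ⟨_, by rw [leftQuotient_starOf_inf_of_mem hw, leftQuotient_countModEq]⟩
  · rw [alphabetOf_starOf_inf_countModEq hb]
    exact replicate_mem_starOf hb _
  · rw [leftQuotient_starOf_inf_of_mem (replicate_mem_starOf hb _), leftQuotient_countModEq]
    simp

end CountModEq

section Difference

variable {α : Type*} [DecidableEq α] {S : Set α} {a b c : α} {m n : ℕ}

variable (S a b m n) in
/-- `none` stands for the empty quotient of `starOf S ⊓ countModEq b n _`, reached by any word
leaving `S`. -/
def sdiffQuotient : ZMod m × Option (ZMod n) → Language α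
  | (s, o) => countModEq a m s \ o.elim 0 fun t => starOf S ⊓ countModEq b n t

theorem leftQuotient_countModEq_sdiff_of_notMem {w : List α} (hw : w ∉ starOf S)
    (r : ZMod m) (r' : ZMod n) :
    leftQuotient (countModEq a m r \ (starOf S ⊓ countModEq b n r')) w =
      sdiffQuotient S a b m n (r - w.count a, none) := by
  rw [leftQuotient_sdiff, leftQuotient_starOf_inf_of_notMem hw, leftQuotient_countModEq]
  rfl

theorem leftQuotient_countModEq_sdiff_of_mem {w : List α} (hw : w ∈ starOf S)
    (r : ZMod m) (r' : ZMod n) :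
    leftQuotient (countModEq a m r \ (starOf S ⊓ countModEq b n r')) w =
      sdiffQuotient S a b m n (r - w.count a, some (r' - w.count b)) := by
  rw [leftQuotient_sdiff, leftQuotient_starOf_inf_of_mem hw, leftQuotient_countModEq,
    leftQuotient_countModEq]
  rfl

theorem mem_sdiffQuotient {x : List α} {s : ZMod m} {o : Option (ZMod n)} :
    x ∈ sdiffQuotient S a b m n (s, o) ↔
      (x.count a : ZMod m) = s ∧ (x ∈ starOf S → o ≠ some (x.count b : ZMod n)) := by
  change x ∈ countModEq a m s ∧ x ∉ o.elim 0 (fun t => starOf S ⊓ countModEq b n t) ↔ _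
  cases o with
  | none => simp [Language.notMem_zero]
  | some t => simp [Language.mem_inf, eq_comm]

theorem cons_replicate_mem_sdiffQuotient (hc : c ∉ S) (hca : c ≠ a) (k : ℕ) (s : ZMod m)
    (o : Option (ZMod n)) :
    c :: replicate k a ∈ sdiffQuotient S a b m n (s, o) ↔ (k : ZMod m) = s := by
  have hS : c :: replicate k a ∉ starOf S := fun h => hc (h c mem_cons_self)
  simp [mem_sdiffQuotient, hS, count_cons, hca]

theorem replicate_append_replicate_mem_sdiffQuotient (ha : a ∈ S) (hb : b ∈ S) (hab : a ≠ b)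
    (k l : ℕ) (s : ZMod m) (o : Option (ZMod n)) :
    replicate k a ++ replicate l b ∈ sdiffQuotient S a b m n (s, o) ↔
      (k : ZMod m) = s ∧ o ≠ some (l : ZMod n) := by
  have hS : replicate k a ++ replicate l b ∈ starOf S :=
    mem_starOf_append.2 ⟨replicate_mem_starOf ha k, replicate_mem_starOf hb l⟩
  simp [mem_sdiffQuotient, hS, count_replicate, hab, hab.symm]

theorem sdiffQuotient_injective [NeZero m] [NeZero n] (ha : a ∈ S) (hb : b ∈ S) (hab : a ≠ b)
    (hc : c ∉ S) : Injective (sdiffQuotient S a b m n) := by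
  have hca : c ≠ a := fun h => hc (h ▸ ha)
  rintro ⟨s, o⟩ ⟨s', o'⟩ h
  have hs : s = s' := by
    have hmem := cons_replicate_mem_sdiffQuotient (b := b) hc hca s.val s o
    rw [h, cons_replicate_mem_sdiffQuotient hc hca] at hmem
    simpa using hmem
  subst hs
  have ho : o = o' := Option.ext fun t => by
    have hmem := congrArg (replicate s.val a ++ replicate t.val b ∈ ·) h
    simpa [replicate_append_replicate_mem_sdiffQuotient ha hb hab, not_iff_not] using hmem
  rw [ho]

theorem alphabetOf_countModEq_sdiff [NeZero m] (hc : c ∉ S) (r : ZMod m) (r' : ZMod n) :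
    alphabetOf (countModEq a m r \ (starOf S ⊓ countModEq b n r')) = Set.univ :=
  Set.eq_univ_of_forall fun x =>
    mem_alphabetOf_of_mem (x := [c, x] ++ _)
      ⟨append_replicate_mem_countModEq [c, x] r, fun h => hc (h.1 c (by simp))⟩ (by simp)

theorem hasComplexity_countModEq_sdiff [NeZero m] [NeZero n] (ha : a ∈ S) (hb : b ∈ S)
    (hab : a ≠ b) (hc : c ∉ S) (r : ZMod m) (r' : ZMod n) :
    HasComplexity (countModEq a m r \ (starOf S ⊓ countModEq b n r')) (m * n + m) := by
  suffices HasComplexity (countModEq a m r \ (starOf S ⊓ countModEq b n r'))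
      (Nat.card (ZMod m × Option (ZMod n))) by
    simpa [Nat.card_prod, Nat.card_eq_fintype_card, mul_add] using this
  have hlet (w : List α) :
      w ∈ starOf (alphabetOf (countModEq a m r \ (starOf S ⊓ countModEq b n r'))) :=
    fun _ _ => by rw [alphabetOf_countModEq_sdiff hc]; trivial
  refine hasComplexity_of_quotients _ (sdiffQuotient_injective ha hb hab hc) (fun w _ => ?_) ?_
  · by_cases hw : w ∈ starOf S
    · exact ⟨_, (leftQuotient_countModEq_sdiff_of_mem hw r r').symm⟩
    · exact ⟨_, (leftQuotient_countModEq_sdiff_of_notMem hw r r').symm⟩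
  · rintro ⟨s, _ | t⟩
    · have hca : c ≠ a := fun h => hc (h ▸ ha)
      have hw : c :: replicate (r - s).val a ∉ starOf S := fun h => hc (h c mem_cons_self)
      refine ⟨_, hlet (c :: replicate (r - s).val a), ?_⟩
      rw [leftQuotient_countModEq_sdiff_of_notMem hw]
      simp [hca]
    · have hw : replicate (r - s).val a ++ replicate (r' - t).val b ∈ starOf S :=
        mem_starOf_append.2 ⟨replicate_mem_starOf ha _, replicate_mem_starOf hb _⟩
      refine ⟨_, hlet (replicate (r - s).val a ++ replicate (r' - t).val b), ?_⟩
      rw [leftQuotient_countModEq_sdiff_of_mem hw]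
      simp [count_replicate, hab, hab.symm]

end Difference

/-- the bound `m·n + m` for difference is tight, with the alphabet of `L`
a proper two-letter subset of the three-letter alphabet of `L'`. -/
theorem difference_tight (m n : ℕ) (hm : 3 ≤ m) (hn : 3 ≤ n) :
    ∃ L' L : Language (Fin 3),
      (alphabetOf L').ncard = 3 ∧ (alphabetOf L).ncard = 2 ∧
      alphabetOf L ⊂ alphabetOf L' ∧
      HasComplexity L' m ∧ HasComplexity L n ∧
      HasComplexity (L' \ L) (m * n + m) := by
  have : NeZero m := ⟨by omega⟩
  have : NeZero n := ⟨by omega⟩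
  have h0 : (0 : Fin 3) ∈ ({0, 1} : Set (Fin 3)) := by simp
  have h1 : (1 : Fin 3) ∈ ({0, 1} : Set (Fin 3)) := by simp
  have h2 : (2 : Fin 3) ∉ ({0, 1} : Set (Fin 3)) := by simp
  refine ⟨countModEq 1 m 0, starOf {0, 1} ⊓ countModEq 0 n 0, ?_, ?_, ?_,
    hasComplexity_countModEq 1 0, hasComplexity_starOf_inf_countModEq h0 0,
    hasComplexity_countModEq_sdiff h1 h0 (by decide) h2 0 0⟩
  · simp [alphabetOf_countModEq]
  · rw [alphabetOf_starOf_inf_countModEq h0, Set.ncard_pair (by decide)]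
  · rw [alphabetOf_countModEq, alphabetOf_starOf_inf_countModEq h0]
    exact Set.ssubset_univ_iff.2 fun h => h2 (h ▸ Set.mem_univ 2)
end
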